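/- Let π = (π₁,…,π_{n_p})ᵀ be an ℝ^{n_p}-valued process on ℤ such that the family {π(t)}_{t∈ℤ} is i.i.d., π₁(t) = 1 for all t, for each fixed t the random variables π₂(t),…,π_{n_p}(t) are mutually independent, each π_i(t) for i ≥ 2 has zero mean and positive variance, and each π_i(t) has finite moments of every order. Then π is an admissible switching process, with E = Σ×Σ and p_σ = E[π_σ(t)²] for σ ∈ Σ. -/

import Mathlib

open MeasureTheory
open scoped Classical Matrix Kronecker

namespace GLSS

variable {Ω : Type*} [MeasurableSpace Ω]

/-- `piW π w t` is the product `π_{σ₁}(t-k+1)⋯π_{σ_k}(t)` for the word `w = σ₁⋯σ_k`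
(and `1` for the empty word). -/
noncomputable def piW {Λ : Type*} (π : ℤ → Ω → Λ → ℝ) (w : List Λ) (t : ℤ) (ω : Ω) : ℝ :=
  ∏ i : Fin w.length, π (t - (w.length : ℤ) + 1 + ((i : ℕ) : ℤ)) ω (w.get i)

/-- `p_w = p_{σ₁}⋯p_{σ_k}`. -/
noncomputable def pW {Λ : Type*} (p : Λ → ℝ) (w : List Λ) : ℝ := (w.map p).prod

/-- `z^r_w(t) = r(t-|w|) π_w(t-1) / √(p_w)`.  For `w = []` this is `r(t)` itself. -/
noncomputable def zW {Λ : Type*} {mι : Type*} (π : ℤ → Ω → Λ → ℝ) (p : Λ → ℝ)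
    (r : ℤ → Ω → mι → ℝ) (w : List Λ) (t : ℤ) (ω : Ω) : mι → ℝ :=
  fun i => r (t - (w.length : ℤ)) ω i * piW π w (t - 1) ω / Real.sqrt (pW p w)

/-- A word is admissible w.r.t. the edge set `E` if all pairs of consecutive letters lie in
`E`; the set of such (nonempty) words is the set `L` of admissible words. -/
def chainIn {Λ : Type*} (E : Set (Λ × Λ)) (w : List Λ) : Prop :=
  w.Chain' (fun a b => (a, b) ∈ E)

/-- The σ-algebra `F^{π,-}_t` generated by `{π(k)}_{k<t}`. -/
def sigmaPast {Λ : Type*} (π : ℤ → Ω → Λ → ℝ) (t : ℤ) : MeasurableSpace Ω :=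
  ⨆ (k : ℤ) (_ : k < t), MeasurableSpace.comap (π k) inferInstance

/-- The σ-algebra `F^{π,+}_t` generated by `{π(k)}_{k≥t}`. -/
def sigmaFuture {Λ : Type*} (π : ℤ → Ω → Λ → ℝ) (t : ℤ) : MeasurableSpace Ω :=
  ⨆ (k : ℤ) (_ : t ≤ k), MeasurableSpace.comap (π k) inferInstance

/-- The σ-algebra `F^r_t` generated by `{r(k)}_{k≤t}`. -/
def sigmaUpTo {β : Type*} [MeasurableSpace β] (r : ℤ → Ω → β) (t : ℤ) : MeasurableSpace Ω :=
  ⨆ (k : ℤ) (_ : k ≤ t), MeasurableSpace.comap (r k) inferInstance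

/-- Conditional independence of the σ-algebras `m₁` and `m₂` given `m'`. -/
def CondIndepSigma (μ : Measure Ω) (m' m₁ m₂ : MeasurableSpace Ω) : Prop :=
  ∀ A B : Set Ω, MeasurableSet[m₁] A → MeasurableSet[m₂] B →
    μ[(A ∩ B).indicator (fun _ => (1 : ℝ)) | m'] =ᵐ[μ]
      fun ω => ((μ[A.indicator (fun _ => (1 : ℝ)) | m']) ω) *
        ((μ[B.indicator (fun _ => (1 : ℝ)) | m']) ω)

/-- Admissible switching process (Definition 1 of the paper), with edge set `E`,
constants `{p_σ}` and `{α_σ}`. -/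
structure IsAdmissible {Λ : Type*} [Fintype Λ] (μ : Measure Ω) (π : ℤ → Ω → Λ → ℝ)
    (E : Set (Λ × Λ)) (p : Λ → ℝ) (α : Λ → ℝ) : Prop where
  meas : ∀ t : ℤ, Measurable (π t)
  sqInt : ∀ (w : List Λ) (t : ℤ), MemLp (piW π w t) 2 μ
  edge_total : ∀ σ : Λ, ∃ σ' : Λ, (σ, σ') ∈ E
  zero_off : ∀ w : List Λ, w ≠ [] → ¬ chainIn E w → ∀ t ω, piW π w t ω = 0
  p_pos : ∀ σ : Λ, 0 < p σ
  cond_pair : ∀ (w v : List Λ), w ≠ [] → v ≠ [] → ∀ (σ σ' : Λ) (t : ℤ),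
    μ[fun ω => piW π (w ++ [σ]) t ω * piW π (v ++ [σ']) t ω | sigmaPast π t] =ᵐ[μ]
      (if σ = σ' ∧ chainIn E (w ++ [σ]) ∧ chainIn E (v ++ [σ]) then
        (fun ω => p σ * (piW π w (t - 1) ω * piW π v (t - 1) ω)) else 0)
  cond_single : ∀ (w : List Λ), w ≠ [] → ∀ (σ σ' : Λ) (t : ℤ),
    μ[fun ω => piW π (w ++ [σ]) t ω * piW π [σ'] t ω | sigmaPast π t] =ᵐ[μ]
      (if σ = σ' ∧ chainIn E (w ++ [σ]) then (fun ω => p σ * piW π w (t - 1) ω) else 0)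
  cond_letters : ∀ (σ σ' : Λ), σ ≠ σ' → ∀ t : ℤ,
    μ[fun ω => piW π [σ] t ω * piW π [σ'] t ω | sigmaPast π t] =ᵐ[μ] 0
  alpha_sum : ∀ (t : ℤ) (ω : Ω), ∑ σ : Λ, α σ * piW π [σ] t ω = 1
  mean_stat : ∀ (w : List Λ) (t τ : ℤ), ∫ ω, piW π w t ω ∂μ = ∫ ω, piW π w (t + τ) ω ∂μ
  cov_stat : ∀ (w v : List Λ) (t s τ : ℤ),
    ∫ ω, piW π w t ω * piW π v s ω ∂μ = ∫ ω, piW π w (t + τ) ω * piW π v (s + τ) ω ∂μ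

/-- Zero-mean wide-sense stationary w.r.t. `π` (ZMWSII) process. -/
structure IsZMWSII {Λ : Type*} [Fintype Λ] {mι : Type*} [Fintype mι]
    (μ : Measure Ω) (π : ℤ → Ω → Λ → ℝ) (p : Λ → ℝ) (r : ℤ → Ω → mι → ℝ) : Prop where
  condIndep : ∀ t : ℤ, CondIndepSigma μ (sigmaPast π t) (sigmaUpTo r t) (sigmaFuture π t)
  sqInt : ∀ (w : List Λ) (t : ℤ), MemLp (zW π p r w t) 2 μ
  zeroMean : ∀ (w : List Λ) (t : ℤ) (i : mι), ∫ ω, zW π p r w t ω i ∂μ = 0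
  jointWSS : ∀ (w v : List Λ) (t s τ : ℤ) (i j : mι),
    ∫ ω, zW π p r w t ω i * zW π p r v s ω j ∂μ
      = ∫ ω, zW π p r w (t + τ) ω i * zW π p r v (s + τ) ω j ∂μ

/-- White noise w.r.t. `π`. -/
structure IsWhiteNoise {Λ : Type*} [Fintype Λ] [DecidableEq Λ] {mι : Type*} [Fintype mι]
    [DecidableEq mι] (μ : Measure Ω) (π : ℤ → Ω → Λ → ℝ) (p : Λ → ℝ)
    (r : ℤ → Ω → mι → ℝ) extends IsZMWSII μ π p r : Prop where
  orth : ∀ (w : List Λ), w ≠ [] → ∀ (σ : Λ) (v : List Λ) (t : ℤ) (i j : mι),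
    ∫ ω, zW π p r w t ω i * zW π p r (σ :: v) t ω j ∂μ =
      if w = σ :: v then ∫ ω, zW π p r [σ] t ω i * zW π p r [σ] t ω j ∂μ else 0
  nonsing : ∀ (σ : Λ) (t : ℤ),
    IsUnit (Matrix.of fun i j : mι => ∫ ω, zW π p r [σ] t ω i * zW π p r [σ] t ω j ∂μ)

/-- `A_w = A_{σ_k} ⋯ A_{σ₁}` for `w = σ₁⋯σ_k` (`A_ε = I`). -/
noncomputable def Aword {Λ : Type*} {ι : Type*} [Fintype ι] [DecidableEq ι]
    (A : Λ → Matrix ι ι ℝ) (w : List Λ) : Matrix ι ι ℝ :=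
  w.foldl (fun M σ => A σ * M) 1

/-- Stationary generalized linear switched system (sGLSS) of `(y, u, π)`, with matrices
`({A_σ, K_σ, B_σ}, C, D, F)`, state process `x` and noise process `v`. -/
structure IsSGLSS {Λ : Type*} [Fintype Λ] [DecidableEq Λ]
    {ι υ ν γ : Type*} [Fintype ι] [DecidableEq ι] [Fintype υ] [DecidableEq υ]
    [Fintype ν] [DecidableEq ν] [Fintype γ] [DecidableEq γ]
    (μ : Measure Ω) (π : ℤ → Ω → Λ → ℝ) (E : Set (Λ × Λ)) (p : Λ → ℝ)
    (A : Λ → Matrix ι ι ℝ) (K : Λ → Matrix ι ν ℝ) (B : Λ → Matrix ι υ ℝ)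
    (C : Matrix γ ι ℝ) (D : Matrix γ υ ℝ) (F : Matrix γ ν ℝ)
    (x : ℤ → Ω → ι → ℝ) (v : ℤ → Ω → ν → ℝ) (u : ℤ → Ω → υ → ℝ)
    (y : ℤ → Ω → γ → ℝ) : Prop where
  state_eq : ∀ t : ℤ, ∀ᵐ ω ∂μ,
    x (t + 1) ω = ∑ σ : Λ, π t ω σ • (A σ *ᵥ x t ω + B σ *ᵥ u t ω + K σ *ᵥ v t ω)
  output_eq : ∀ t : ℤ, ∀ᵐ ω ∂μ, y t ω = C *ᵥ x t ω + D *ᵥ u t ω + F *ᵥ v t ω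
  noise_white : IsWhiteNoise μ π p (fun t ω => Sum.elim (v t ω) (u t ω))
  joint_zmwsii : IsZMWSII μ π p (fun t ω => Sum.elim (x t ω) (Sum.elim (v t ω) (u t ω)))
  state_noise_orth : ∀ (σ : Λ) (t : ℤ) (i : ι) (j : ν ⊕ υ),
    ∫ ω, zW π p x [σ] t ω i *
      zW π p (fun t ω => Sum.elim (v t ω) (u t ω)) [σ] t ω j ∂μ = 0
  state_noise_orth' : ∀ (s : List Λ), s ≠ [] → ∀ (t : ℤ) (i : ι) (j : ν ⊕ υ),
    ∫ ω, x t ω i * zW π p (fun t ω => Sum.elim (v t ω) (u t ω)) s t ω j ∂μ = 0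
  stable : ∀ z ∈ spectrum ℂ
      ((∑ σ : Λ, p σ • Matrix.kroneckerMap (· * ·) (A σ) (A σ)).map (algebraMap ℝ ℂ)),
    ‖z‖ < 1
  off_edge : ∀ σ₁ σ₂ : Λ, (σ₁, σ₂) ∉ E →
    A σ₂ * A σ₁ = 0 ∧ ∀ t : ℤ,
      A σ₂ * Matrix.fromCols (K σ₁) (B σ₁) *
        Matrix.of (fun i j : ν ⊕ υ =>
          ∫ ω, zW π p (fun t ω => Sum.elim (v t ω) (u t ω)) [σ₁] t ω i *
            zW π p (fun t ω => Sum.elim (v t ω) (u t ω)) [σ₁] t ω j ∂μ) = 0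

/-- Autonomous stationary generalized linear switched system (asGLSS) of `(y, π)`, with
matrices `({A_σ, K_σ}, C, F)`, state process `x` and noise process `v`. -/
structure IsASGLSS {Λ : Type*} [Fintype Λ] [DecidableEq Λ]
    {ι ν γ : Type*} [Fintype ι] [DecidableEq ι] [Fintype ν] [DecidableEq ν]
    [Fintype γ] [DecidableEq γ]
    (μ : Measure Ω) (π : ℤ → Ω → Λ → ℝ) (E : Set (Λ × Λ)) (p : Λ → ℝ)
    (A : Λ → Matrix ι ι ℝ) (K : Λ → Matrix ι ν ℝ)
    (C : Matrix γ ι ℝ) (F : Matrix γ ν ℝ)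
    (x : ℤ → Ω → ι → ℝ) (v : ℤ → Ω → ν → ℝ) (y : ℤ → Ω → γ → ℝ) : Prop where
  state_eq : ∀ t : ℤ, ∀ᵐ ω ∂μ,
    x (t + 1) ω = ∑ σ : Λ, π t ω σ • (A σ *ᵥ x t ω + K σ *ᵥ v t ω)
  output_eq : ∀ t : ℤ, ∀ᵐ ω ∂μ, y t ω = C *ᵥ x t ω + F *ᵥ v t ω
  noise_white : IsWhiteNoise μ π p v
  joint_zmwsii : IsZMWSII μ π p (fun t ω => Sum.elim (x t ω) (v t ω))
  state_noise_orth : ∀ (σ : Λ) (t : ℤ) (i : ι) (j : ν),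
    ∫ ω, zW π p x [σ] t ω i * zW π p v [σ] t ω j ∂μ = 0
  state_noise_orth' : ∀ (s : List Λ), s ≠ [] → ∀ (t : ℤ) (i : ι) (j : ν),
    ∫ ω, x t ω i * zW π p v s t ω j ∂μ = 0
  stable : ∀ z ∈ spectrum ℂ
      ((∑ σ : Λ, p σ • Matrix.kroneckerMap (· * ·) (A σ) (A σ)).map (algebraMap ℝ ℂ)),
    ‖z‖ < 1
  off_edge : ∀ σ₁ σ₂ : Λ, (σ₁, σ₂) ∉ E →
    A σ₂ * A σ₁ = 0 ∧ ∀ t : ℤ,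
      A σ₂ * K σ₁ *
        Matrix.of (fun i j : ν => ∫ ω, zW π p v [σ₁] t ω i * zW π p v [σ₁] t ω j ∂μ) = 0

/-- `f` belongs to the closed subspace of `L²(μ)` generated by the set `S`:
it is an `L²`-limit of finite linear combinations of elements of `S`. -/
def memL2Span (μ : Measure Ω) (S : Set (Ω → ℝ)) (f : Ω → ℝ) : Prop :=
  ∀ ε : ℝ, 0 < ε → ∃ g ∈ Submodule.span ℝ S, eLpNorm (f - g) 2 μ < ENNReal.ofReal ε

/-- `f` is orthogonal in `L²(μ)` to the closed subspace generated by `S`. -/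
def orthToSpan (μ : Measure Ω) (S : Set (Ω → ℝ)) (f : Ω → ℝ) : Prop :=
  ∀ g : Ω → ℝ, MemLp g 2 μ → memL2Span μ S g → ∫ ω, f ω * g ω ∂μ = 0

/-- `g = E_l[f ∣ S]`: the orthogonal projection of `f` onto the closed linear span of `S`
in `L²(μ)`, characterized by `g` lying in the closed span and `f - g` being orthogonal to
every generator. -/
def IsLinearProj (μ : Measure Ω) (S : Set (Ω → ℝ)) (f g : Ω → ℝ) : Prop :=
  MemLp g 2 μ ∧ memL2Span μ S g ∧ ∀ h ∈ S, ∫ ω, (f ω - g ω) * h ω ∂μ = 0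

/-- The components of `{z^r_w(t)}_{w ∈ Σ⁺}` (generators of `H^r_t`). -/
def pastSpan {Λ : Type*} {mι : Type*} (π : ℤ → Ω → Λ → ℝ) (p : Λ → ℝ)
    (r : ℤ → Ω → mι → ℝ) (t : ℤ) : Set (Ω → ℝ) :=
  {f | ∃ (w : List Λ) (i : mι), w ≠ [] ∧ f = fun ω => zW π p r w t ω i}

/-- The components of `{z^r_w(t)}_{w ∈ Σ⁺} ∪ {r(t)}` (generators of `H^r_{t,+}`). -/
def pastPlusSpan {Λ : Type*} {mι : Type*} (π : ℤ → Ω → Λ → ℝ) (p : Λ → ℝ)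
    (r : ℤ → Ω → mι → ℝ) (t : ℤ) : Set (Ω → ℝ) :=
  {f | ∃ (w : List Λ) (i : mι), f = fun ω => zW π p r w t ω i}

/-- Unconditional convergence of the series `∑ f a` to `g` in the mean-square sense. -/
def HasSumL2 {κ : Type*} (μ : Measure Ω) (f : κ → Ω → ℝ) (g : Ω → ℝ) : Prop :=
  ∀ ε : ℝ, 0 < ε → ∃ s : Finset κ, ∀ T : Finset κ, s ⊆ T →
    eLpNorm (fun ω => (∑ a ∈ T, f a ω) - g ω) 2 μ < ENNReal.ofReal ε

section Stmt14Aux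
set_option linter.unusedSectionVars false

variable {μ : Measure Ω} {np : ℕ} [NeZero np] {π : ℤ → Ω → Fin np → ℝ}

lemma piW_nil (t : ℤ) (ω : Ω) : piW π ([] : List (Fin np)) t ω = 1 := by
  simp [piW]

lemma piW_single (σ : Fin np) (t : ℤ) (ω : Ω) : piW π [σ] t ω = π t ω σ := by
  simp [piW]

lemma piW_eq_range (w : List (Fin np)) (t : ℤ) (ω : Ω) :
    piW π w t ω = ∏ j ∈ Finset.range w.length,
      π (t - (w.length : ℤ) + 1 + (j : ℤ)) ω (w.getD j 0) := by
  rw [← Fin.prod_univ_eq_prod_range]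
  unfold piW
  refine Finset.prod_congr rfl fun i _ => ?_
  rw [List.getD_eq_getElem _ _ i.isLt, List.get_eq_getElem]

lemma piW_append (w : List (Fin np)) (σ : Fin np) (t : ℤ) (ω : Ω) :
    piW π (w ++ [σ]) t ω = piW π w (t - 1) ω * π t ω σ := by
  rw [piW_eq_range, piW_eq_range]
  simp only [List.length_append, List.length_cons, List.length_nil, Nat.zero_add]
  rw [Finset.prod_range_succ]
  congr 1
  · refine Finset.prod_congr rfl fun j hj => ?_
    rw [List.getD_append _ _ _ _ (Finset.mem_range.1 hj)]
    have : t - ((w.length + 1 : ℕ) : ℤ) + 1 + (j : ℤ)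
        = t - 1 - (w.length : ℤ) + 1 + (j : ℤ) := by push_cast; ring
    rw [this]
  · rw [List.getD_append_right _ _ _ _ le_rfl]
    have : t - ((w.length + 1 : ℕ) : ℤ) + 1 + ((w.length : ℕ) : ℤ) = t := by push_cast; ring
    rw [this]
    simp

/-- factor of a word-product at offset `d` (0-based position in the word). -/
noncomputable def wfac {np : ℕ} [NeZero np] (w : List (Fin np)) (d : ℤ)
    (x : Fin np → ℝ) : ℝ :=
  if h : 0 ≤ d ∧ d.toNat < w.length then x (w.get ⟨d.toNat, h.2⟩) else 1

lemma wfac_measurable (w : List (Fin np)) (d : ℤ) : Measurable (wfac w d) := by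
  unfold wfac
  split
  · exact measurable_pi_apply _
  · exact measurable_const

lemma wfac_get (w : List (Fin np)) (d : ℤ) (x : Fin np → ℝ) (hd : 0 ≤ d)
    (hd2 : d.toNat < w.length) : wfac w d x = x (w.getD d.toNat 0) := by
  rw [wfac, dif_pos ⟨hd, hd2⟩, List.getD_eq_getElem _ _ hd2, List.get_eq_getElem]

lemma wfac_one (w : List (Fin np)) (d : ℤ) (x : Fin np → ℝ)
    (hd : d < 0 ∨ (w.length : ℤ) ≤ d) : wfac w d x = 1 := by
  rw [wfac, dif_neg]
  rintro ⟨h1, h2⟩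
  omega

lemma piW_eq_prod_Icc (w : List (Fin np)) (t a b : ℤ) (ha : a ≤ t - w.length + 1)
    (hb : t ≤ b) (ω : Ω) :
    piW π w t ω = ∏ u ∈ Finset.Icc a b, wfac w (u - t + w.length - 1) (π u ω) := by
  classical
  rw [show (Finset.Icc a b) = Finset.Icc (t - w.length + 1) t
      ∪ (Finset.Icc a b \ Finset.Icc (t - w.length + 1) t) from ?_]
  · rw [Finset.prod_union Finset.disjoint_sdiff]
    have h2 : ∏ u ∈ Finset.Icc a b \ Finset.Icc (t - w.length + 1) t,
        wfac w (u - t + w.length - 1) (π u ω) = 1 := by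
      refine Finset.prod_eq_one fun u hu => ?_
      rw [Finset.mem_sdiff, Finset.mem_Icc, Finset.mem_Icc] at hu
      refine wfac_one _ _ _ ?_
      omega
    rw [h2, mul_one, piW_eq_range]
    refine Finset.prod_nbij' (fun j => t - w.length + 1 + j)
      (fun u => (u - t + w.length - 1).toNat) ?_ ?_ ?_ ?_ ?_
    · intro j hj
      rw [Finset.mem_range] at hj
      rw [Finset.mem_Icc]
      omega
    · intro u hu
      rw [Finset.mem_Icc] at hu
      rw [Finset.mem_range]
      omega
    · intro j hj
      rw [Finset.mem_range] at hj
      omega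
    · intro u hu
      rw [Finset.mem_Icc] at hu
      omega
    · intro j hj
      rw [Finset.mem_range] at hj
      have hd : t - ↑w.length + 1 + (j : ℤ) - t + ↑w.length - 1 = (j : ℤ) := by ring
      rw [hd, wfac_get _ _ _ (Int.natCast_nonneg j) (by simpa using hj)]
      simp
  · rw [Finset.union_sdiff_of_subset]
    exact Finset.Icc_subset_Icc ha hb

lemma integral_prod_indep [IsProbabilityMeasure μ]
    (hmeas : ∀ t : ℤ, Measurable (π t))
    (hindep : ProbabilityTheory.iIndepFun (fun t => π t) μ)
    (S : Finset ℤ) (g : ℤ → (Fin np → ℝ) → ℝ) (hg : ∀ u, Measurable (g u)) :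
    ∫ ω, ∏ u ∈ S, g u (π u ω) ∂μ = ∏ u ∈ S, ∫ ω, g u (π u ω) ∂μ := by
  classical
  induction S using Finset.induction_on with
  | empty => simp
  | @insert a s ha ih =>
    have h1 := ProbabilityTheory.indep_biSup_compl
      (fun n => (hmeas n).comap_le) hindep.iIndep ({a} : Set ℤ)
    set M1 : MeasurableSpace Ω := ⨆ n ∈ ({a} : Set ℤ), MeasurableSpace.comap (π n) inferInstance
    set M2 : MeasurableSpace Ω :=
      ⨆ n ∈ ({a} : Set ℤ)ᶜ, MeasurableSpace.comap (π n) inferInstance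
    have hma : @Measurable Ω ℝ M1 _ (fun ω => g a (π a ω)) := by
      refine (hg a).comp ?_
      refine measurable_iff_comap_le.2 ?_
      exact le_iSup₂ (f := fun (n : ℤ) (_ : n ∈ ({a} : Set ℤ)) =>
        MeasurableSpace.comap (π n) inferInstance) a rfl
    have hms : @Measurable Ω ℝ M2 _ (fun ω => ∏ u ∈ s, g u (π u ω)) := by
      refine Finset.measurable_prod _ fun u hu => ?_
      refine (hg u).comp ?_
      refine measurable_iff_comap_le.2 ?_
      exact le_iSup₂ (f := fun (n : ℤ) (_ : n ∈ ({a} : Set ℤ)ᶜ) =>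
        MeasurableSpace.comap (π n) inferInstance) u (by simp; rintro rfl; exact ha hu)
    have hInd : ProbabilityTheory.IndepFun (fun ω => g a (π a ω))
        (fun ω => ∏ u ∈ s, g u (π u ω)) μ := by
      rw [ProbabilityTheory.IndepFun_iff_Indep]
      exact ProbabilityTheory.indep_of_indep_of_le_left
        (ProbabilityTheory.indep_of_indep_of_le_right h1
          (measurable_iff_comap_le.1 hms)) (measurable_iff_comap_le.1 hma)
    have key : ∫ ω, g a (π a ω) * ∏ u ∈ s, g u (π u ω) ∂μ
        = (∫ ω, g a (π a ω) ∂μ) * ∫ ω, ∏ u ∈ s, g u (π u ω) ∂μ := by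
      refine hInd.integral_mul_eq_mul_integral ?_ ?_
      · exact ((hg a).comp (hmeas a)).aestronglyMeasurable
      · exact (Finset.measurable_prod _ fun u _ => (hg u).comp (hmeas u)).aestronglyMeasurable
    simp only [Finset.prod_insert ha]
    rw [key, ih]

lemma cov_shift [IsProbabilityMeasure μ]
    (hmeas : ∀ t : ℤ, Measurable (π t))
    (hindep : ProbabilityTheory.iIndepFun (fun t => π t) μ)
    (hident : ∀ t s : ℤ, ProbabilityTheory.IdentDistrib (π t) (π s) μ μ)
    (w v : List (Fin np)) (t s τ : ℤ) :
    ∫ ω, piW π w t ω * piW π v s ω ∂μ = ∫ ω, piW π w (t + τ) ω * piW π v (s + τ) ω ∂μ := by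
  classical
  set a := min (t - w.length + 1) (s - v.length + 1) with ha
  set b := max t s with hb
  set g : ℤ → (Fin np → ℝ) → ℝ := fun u x =>
    wfac w (u - t + w.length - 1) x * wfac v (u - s + v.length - 1) x with hgdef
  have hg : ∀ u, Measurable (g u) := fun u =>
    (wfac_measurable _ _).mul (wfac_measurable _ _)
  have e1 : ∀ ω, piW π w t ω * piW π v s ω = ∏ u ∈ Finset.Icc a b, g u (π u ω) := by
    intro ω
    rw [piW_eq_prod_Icc w t a b (min_le_left _ _) (le_max_left _ _) ω,
      piW_eq_prod_Icc v s a b (min_le_right _ _) (le_max_right _ _) ω,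
      ← Finset.prod_mul_distrib]
  have e2 : ∀ ω, piW π w (t + τ) ω * piW π v (s + τ) ω
      = ∏ u ∈ Finset.Icc (a + τ) (b + τ), g (u - τ) (π u ω) := by
    intro ω
    rw [piW_eq_prod_Icc w (t + τ) (a + τ) (b + τ) (by omega) (by omega) ω,
      piW_eq_prod_Icc v (s + τ) (a + τ) (b + τ) (by omega) (by omega) ω,
      ← Finset.prod_mul_distrib]
    refine Finset.prod_congr rfl fun u hu => ?_
    rw [hgdef]
    dsimp only
    congr 2 <;> ring
  calc ∫ ω, piW π w t ω * piW π v s ω ∂μ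
      = ∫ ω, ∏ u ∈ Finset.Icc a b, g u (π u ω) ∂μ := by simp only [e1]
    _ = ∏ u ∈ Finset.Icc a b, ∫ ω, g u (π u ω) ∂μ :=
        integral_prod_indep hmeas hindep _ _ hg
    _ = ∏ u ∈ Finset.Icc a b, ∫ ω, g u (π (u + τ) ω) ∂μ := by
        refine Finset.prod_congr rfl fun u _ => ?_
        exact ((hident u (u + τ)).comp (hg u)).integral_eq
    _ = ∏ u ∈ Finset.Icc (a + τ) (b + τ), ∫ ω, g (u - τ) (π u ω) ∂μ := by
        rw [← Finset.map_add_right_Icc, Finset.prod_map]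
        refine Finset.prod_congr rfl fun u _ => ?_
        simp [addRightEmbedding]
    _ = ∫ ω, ∏ u ∈ Finset.Icc (a + τ) (b + τ), g (u - τ) (π u ω) ∂μ :=
        (integral_prod_indep hmeas hindep _ _ (fun u => hg (u - τ))).symm
    _ = ∫ ω, piW π w (t + τ) ω * piW π v (s + τ) ω ∂μ := by simp only [e2]

lemma memLp_mul' {f g : Ω → ℝ} {p q r : ENNReal} (hf : MemLp f q μ) (hg : MemLp g r μ)
    (h : 1 / p = 1 / q + 1 / r) : MemLp (fun ω => f ω * g ω) p μ := by
  haveI : ENNReal.HolderTriple q r p := ⟨by simpa only [one_div] using h.symm⟩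
  have := MeasureTheory.MemLp.smul (φ := f) (p := q) (q := r) (r := p) hg hf
  exact this

lemma pi_memLp [IsProbabilityMeasure μ]
    (hmom : ∀ (t : ℤ) (i : Fin np) (n : ℕ), MemLp (fun ω => π t ω i) n μ)
    (t : ℤ) (i : Fin np) {q : ENNReal} (hq : q ≠ ⊤) : MemLp (fun ω => π t ω i) q μ := by
  refine (hmom t i ⌈q.toReal⌉₊).mono_exponent ?_
  calc q = ENNReal.ofReal q.toReal := (ENNReal.ofReal_toReal hq).symm
    _ ≤ ENNReal.ofReal (⌈q.toReal⌉₊ : ℝ) := ENNReal.ofReal_le_ofReal (Nat.le_ceil _)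
    _ = ((⌈q.toReal⌉₊ : ENNReal)) := ENNReal.ofReal_natCast _

lemma half_exponent (q : ENNReal) (h0 : q ≠ 0) (h : q ≠ ⊤) :
    1 / q = 1 / (2 * q) + 1 / (2 * q) := by
  rw [ENNReal.div_add_div_same, one_add_one_eq_two,
    show (2 : ENNReal) = 2 * 1 from (mul_one 2).symm,
    show (2 : ENNReal) * 1 * q = 2 * q from by rw [mul_one],
    ENNReal.mul_div_mul_left _ _ two_ne_zero ENNReal.ofNat_ne_top]

lemma piW_memLp [IsProbabilityMeasure μ]
    (hmom : ∀ (t : ℤ) (i : Fin np) (n : ℕ), MemLp (fun ω => π t ω i) n μ)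
    (w : List (Fin np)) : ∀ (t : ℤ) {q : ENNReal}, q ≠ 0 → q ≠ ⊤ → MemLp (piW π w t) q μ := by
  induction w using List.reverseRecOn with
  | nil =>
    intro t q _ hq
    have h1 : piW π ([] : List (Fin np)) t = fun _ => (1 : ℝ) := funext (piW_nil t)
    rw [h1]
    exact memLp_const 1
  | append_singleton ws σ ih =>
    intro t q h0 hq
    have h2q0 : (2 * q) ≠ 0 := by simp [h0]
    have h2q : (2 * q) ≠ ⊤ := ENNReal.mul_ne_top ENNReal.ofNat_ne_top hq
    have hpi : MemLp (fun ω => π t ω σ) (2 * q) μ := pi_memLp hmom t σ h2q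
    have hw : MemLp (piW π ws (t - 1)) (2 * q) μ := ih (t - 1) h2q0 h2q
    have heq : piW π (ws ++ [σ]) t = fun ω => piW π ws (t - 1) ω * π t ω σ :=
      funext (piW_append ws σ t)
    rw [heq]
    exact memLp_mul' hw hpi (half_exponent q h0 hq)

lemma one_half_half : (1 : ENNReal) / 1 = 1 / 2 + 1 / 2 := by
  rw [ENNReal.div_add_div_same, one_add_one_eq_two,
    ENNReal.div_self two_ne_zero ENNReal.ofNat_ne_top]
  simp

lemma integrable_L2_mul {f g : Ω → ℝ} (hf : MemLp f 2 μ) (hg : MemLp g 2 μ) :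
    Integrable (fun ω => f ω * g ω) μ :=
  memLp_one_iff_integrable.mp (by simpa using memLp_mul' hf hg one_half_half)

lemma chainIn_univ : ∀ (w : List (Fin np)), chainIn (Set.univ : Set (Fin np × Fin np)) w
  | [] => List.isChain_nil
  | [_] => List.isChain_singleton _
  | _ :: b :: l => List.IsChain.cons_cons (Set.mem_univ _) (chainIn_univ (b :: l))

lemma sigmaPast_le (hmeas : ∀ t : ℤ, Measurable (π t)) (t : ℤ) :
    sigmaPast π t ≤ (inferInstance : MeasurableSpace Ω) :=
  iSup₂_le fun k _ => (hmeas k).comap_le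

lemma measurable_piW_past {t s : ℤ} (hst : s < t) (w : List (Fin np)) :
    Measurable[sigmaPast π t] (piW π w s) := by
  unfold piW
  refine Finset.measurable_prod _ fun i _ => ?_
  have hk : s - (w.length : ℤ) + 1 + ((i : ℕ) : ℤ) < t := by
    have h := i.isLt
    omega
  exact (measurable_pi_apply _).comp (measurable_iff_comap_le.2
    (le_iSup₂ (f := fun (k : ℤ) (_ : k < t) =>
      MeasurableSpace.comap (π k) inferInstance) _ hk))

lemma indep_letter_past
    (hmeas : ∀ t : ℤ, Measurable (π t))
    (hindep : ProbabilityTheory.iIndepFun (fun t => π t) μ)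
    (t : ℤ) :
    ProbabilityTheory.Indep (MeasurableSpace.comap (π t) inferInstance) (sigmaPast π t) μ := by
  have h1 := ProbabilityTheory.indep_biSup_compl
    (fun n => (hmeas n).comap_le) hindep.iIndep {k : ℤ | k < t}
  have h2 : sigmaPast π t
      = ⨆ n ∈ {k : ℤ | k < t}, MeasurableSpace.comap (π n) inferInstance := rfl
  rw [h2]
  refine ProbabilityTheory.indep_of_indep_of_le_left h1.symm ?_
  exact le_iSup₂ (f := fun (n : ℤ) (_ : n ∈ ({k : ℤ | k < t})ᶜ) =>
    MeasurableSpace.comap (π n) inferInstance) t (by simp)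

lemma condexp_mul_indep [IsProbabilityMeasure μ]
    (hmeas : ∀ t : ℤ, Measurable (π t))
    (hindep : ProbabilityTheory.iIndepFun (fun t => π t) μ)
    (t : ℤ) {f g : Ω → ℝ}
    (hf : StronglyMeasurable[sigmaPast π t] f)
    (hgm : StronglyMeasurable[MeasurableSpace.comap (π t) inferInstance] g)
    (hfg : Integrable (f * g) μ) (hg : Integrable g μ) :
    μ[f * g | sigmaPast π t] =ᵐ[μ] fun ω => f ω * ∫ x, g x ∂μ := by
  have hm : sigmaPast π t ≤ (inferInstance : MeasurableSpace Ω) := sigmaPast_le hmeas t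
  haveI : SigmaFinite (μ.trim hm) := inferInstance
  have h1 := condExp_mul_of_stronglyMeasurable_left (μ := μ) hf hfg hg
  have h2 := condExp_indep_eq (μ := μ)
    (m₁ := MeasurableSpace.comap (π t) inferInstance) ((hmeas t).comap_le)
    hm hgm (indep_letter_past hmeas hindep t)
  filter_upwards [h1, h2] with ω h1ω h2ω
  rw [h1ω, Pi.mul_apply, h2ω]

lemma int_mul_letters [IsProbabilityMeasure μ]
    (hmeas : ∀ t : ℤ, Measurable (π t))
    (hident : ∀ t s : ℤ, ProbabilityTheory.IdentDistrib (π t) (π s) μ μ)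
    (hone : ∀ (t : ℤ) (ω : Ω), π t ω 0 = 1)
    (hcomp : ∀ t : ℤ, ProbabilityTheory.iIndepFun
      (fun (i : {i : Fin np // i ≠ 0}) ω => π t ω i.1) μ)
    (hzero : ∀ (t : ℤ) (i : Fin np), i ≠ 0 → ∫ ω, π t ω i ∂μ = 0)
    (t : ℤ) (σ σ' : Fin np) :
    ∫ ω, π t ω σ * π t ω σ' ∂μ
      = if σ = σ' then (∫ ω, (π 0 ω σ) ^ 2 ∂μ) else 0 := by
  by_cases h : σ = σ'
  · subst h
    rw [if_pos rfl]
    have hu : Measurable (fun x : Fin np → ℝ => (x σ) ^ 2) :=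
      (measurable_pi_apply σ).pow_const 2
    have hid := ((hident t 0).comp hu).integral_eq
    simp only [Function.comp] at hid
    calc ∫ ω, π t ω σ * π t ω σ ∂μ = ∫ ω, (π t ω σ) ^ 2 ∂μ := by
          refine integral_congr_ae (Filter.Eventually.of_forall fun ω => ?_)
          ring
      _ = ∫ ω, (π 0 ω σ) ^ 2 ∂μ := hid
  · rw [if_neg h]
    by_cases h0 : σ = 0
    · subst h0
      have hσ' : σ' ≠ 0 := fun e => h e.symm
      calc ∫ ω, π t ω 0 * π t ω σ' ∂μ = ∫ ω, π t ω σ' ∂μ := by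
            refine integral_congr_ae (Filter.Eventually.of_forall fun ω => ?_)
            dsimp only
            rw [hone t ω, one_mul]
        _ = 0 := hzero t σ' hσ'
    · by_cases h0' : σ' = 0
      · subst h0'
        calc ∫ ω, π t ω σ * π t ω 0 ∂μ = ∫ ω, π t ω σ ∂μ := by
              refine integral_congr_ae (Filter.Eventually.of_forall fun ω => ?_)
              dsimp only
              rw [hone t ω, mul_one]
          _ = 0 := hzero t σ h0
      · have hIF : ProbabilityTheory.IndepFun (fun ω => π t ω σ) (fun ω => π t ω σ') μ :=
          (hcomp t).indepFun (i := ⟨σ, h0⟩) (j := ⟨σ', h0'⟩)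
            (fun hh => h (congrArg Subtype.val hh))
        rw [show ∫ ω, π t ω σ * π t ω σ' ∂μ = _ from
          hIF.integral_mul_eq_mul_integral ((measurable_pi_apply σ).comp (hmeas t)).aestronglyMeasurable
          ((measurable_pi_apply σ').comp (hmeas t)).aestronglyMeasurable,
          hzero t σ h0, zero_mul]

end Stmt14Aux

/-- Example 1: white-noise scheduling.  An i.i.d. process `π` with
`π₁ = 1`, independent zero-mean coordinates with positive variance and all moments finite is
admissible, with `E = Σ × Σ` and `p_σ = E[π_σ(t)²]`. -/
theorem stmt14
    {Ω : Type*} [MeasurableSpace Ω] (μ : Measure Ω) [IsProbabilityMeasure μ]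
    {np : ℕ} [NeZero np]
    (π : ℤ → Ω → Fin np → ℝ)
    (hmeas : ∀ t : ℤ, Measurable (π t))
    (hindep : ProbabilityTheory.iIndepFun (fun t => π t) μ)
    (hident : ∀ t s : ℤ, ProbabilityTheory.IdentDistrib (π t) (π s) μ μ)
    (hone : ∀ (t : ℤ) (ω : Ω), π t ω 0 = 1)
    (hcomp : ∀ t : ℤ, ProbabilityTheory.iIndepFun
      (fun (i : {i : Fin np // i ≠ 0}) ω => π t ω i.1) μ)
    (hzero : ∀ (t : ℤ) (i : Fin np), i ≠ 0 → ∫ ω, π t ω i ∂μ = 0)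
    (hvar : ∀ (t : ℤ) (i : Fin np), i ≠ 0 → 0 < ∫ ω, (π t ω i) ^ 2 ∂μ)
    (hmom : ∀ (t : ℤ) (i : Fin np) (n : ℕ), MemLp (fun ω => π t ω i) n μ) :
    ∃ α : Fin np → ℝ,
      IsAdmissible μ π Set.univ (fun σ => ∫ ω, (π 0 ω σ) ^ 2 ∂μ) α := by
  classical
  refine ⟨fun σ => if σ = 0 then 1 else 0, ?_⟩
  have two0 : (2 : ENNReal) ≠ 0 := by norm_num
  have two' : (2 : ENNReal) ≠ ⊤ := by norm_num
  have four' : (2 * 2 : ENNReal) ≠ ⊤ := by norm_num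
  have four0 : (2 * 2 : ENNReal) ≠ 0 := by norm_num
  have hL2 : ∀ (w : List (Fin np)) (t : ℤ), MemLp (piW π w t) 2 μ := fun w t =>
    piW_memLp hmom w t two0 two'
  have hcond : ∀ (F : Ω → ℝ) (t : ℤ) (σ σ' : Fin np),
      StronglyMeasurable[sigmaPast π t] F → MemLp F 2 μ →
      μ[F * (fun ω => π t ω σ * π t ω σ') | sigmaPast π t] =ᵐ[μ]
        fun ω => F ω * (if σ = σ' then ∫ ω', (π 0 ω' σ) ^ 2 ∂μ else 0) := by
    intro F t σ σ' hFm hF2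
    have hg2 : MemLp (fun ω => π t ω σ * π t ω σ') 2 μ :=
      memLp_mul' (pi_memLp hmom t σ four') (pi_memLp hmom t σ' four')
        (half_exponent 2 two0 two')
    have hc : Measurable[MeasurableSpace.comap (π t) inferInstance] (π t) :=
      measurable_iff_comap_le.2 le_rfl
    have hgm : StronglyMeasurable[MeasurableSpace.comap (π t) inferInstance]
        (fun ω => π t ω σ * π t ω σ') :=
      (((measurable_pi_apply σ).comp hc).mul
        ((measurable_pi_apply σ').comp hc)).stronglyMeasurable
    have hfg : Integrable (F * fun ω => π t ω σ * π t ω σ') μ :=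
      integrable_L2_mul hF2 hg2
    have hgInt : Integrable (fun ω => π t ω σ * π t ω σ') μ :=
      memLp_one_iff_integrable.mp (hg2.mono_exponent (by norm_num))
    have h := condexp_mul_indep hmeas hindep t hFm hgm hfg hgInt
    rw [int_mul_letters hmeas hident hone hcomp hzero t σ σ'] at h
    exact h
  refine ⟨hmeas, hL2, fun σ => ⟨σ, trivial⟩,
    fun w hw hchain => absurd (chainIn_univ w) hchain, ?_, ?_, ?_, ?_, ?_, ?_, ?_⟩
  · -- p_pos
    intro σ
    by_cases h0 : σ = 0
    · subst h0
      have : (fun ω => (π 0 ω 0) ^ 2) = fun _ : Ω => (1 : ℝ) := by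
        funext ω
        rw [hone 0 ω]
        norm_num
      simp only [this]
      rw [integral_const]
      simp
    · exact hvar 0 σ h0
  · -- cond_pair
    intro w v hw hv σ σ' t
    have heq : (fun ω => piW π (w ++ [σ]) t ω * piW π (v ++ [σ']) t ω)
        = (fun ω => piW π w (t - 1) ω * piW π v (t - 1) ω)
          * (fun ω => π t ω σ * π t ω σ') := by
      funext ω
      simp only [Pi.mul_apply, piW_append]
      ring
    rw [heq]
    have hFm : StronglyMeasurable[sigmaPast π t]
        (fun ω => piW π w (t - 1) ω * piW π v (t - 1) ω) :=
      ((measurable_piW_past (by omega) w).mul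
        (measurable_piW_past (by omega) v)).stronglyMeasurable
    have hF2 : MemLp (fun ω => piW π w (t - 1) ω * piW π v (t - 1) ω) 2 μ :=
      memLp_mul' (piW_memLp hmom w (t - 1) four0 four')
        (piW_memLp hmom v (t - 1) four0 four') (half_exponent 2 two0 two')
    refine (hcond _ t σ σ' hFm hF2).trans (Filter.EventuallyEq.of_eq ?_)
    by_cases hσ : σ = σ'
    · subst hσ
      funext ω
      rw [if_pos (show σ = σ ∧ chainIn Set.univ (w ++ [σ]) ∧ chainIn Set.univ (v ++ [σ])
        from ⟨rfl, chainIn_univ _, chainIn_univ _⟩), if_pos (show σ = σ from rfl)]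
      ring
    · funext ω
      rw [if_neg hσ, mul_zero,
        if_neg (show ¬(σ = σ' ∧ chainIn Set.univ (w ++ [σ]) ∧ chainIn Set.univ (v ++ [σ]))
          from fun hcmp => hσ hcmp.1)]
      simp
  · -- cond_single
    intro w hw σ σ' t
    have heq : (fun ω => piW π (w ++ [σ]) t ω * piW π [σ'] t ω)
        = (piW π w (t - 1)) * (fun ω => π t ω σ * π t ω σ') := by
      funext ω
      simp only [Pi.mul_apply, piW_append, piW_single]
      ring
    rw [heq]
    have hFm : StronglyMeasurable[sigmaPast π t] (piW π w (t - 1)) :=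
      (measurable_piW_past (by omega) w).stronglyMeasurable
    refine (hcond _ t σ σ' hFm (hL2 w (t - 1))).trans (Filter.EventuallyEq.of_eq ?_)
    by_cases hσ : σ = σ'
    · subst hσ
      funext ω
      rw [if_pos (show σ = σ ∧ chainIn Set.univ (w ++ [σ])
        from ⟨rfl, chainIn_univ _⟩), if_pos (show σ = σ from rfl)]
      ring
    · funext ω
      rw [if_neg hσ, mul_zero,
        if_neg (show ¬(σ = σ' ∧ chainIn Set.univ (w ++ [σ]))
          from fun hcmp => hσ hcmp.1)]
      simp
  · -- cond_letters
    intro σ σ' hσ t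
    have heq : (fun ω => piW π [σ] t ω * piW π [σ'] t ω)
        = (fun _ : Ω => (1 : ℝ)) * (fun ω => π t ω σ * π t ω σ') := by
      funext ω
      simp only [Pi.mul_apply, piW_single, one_mul]
    rw [heq]
    refine (hcond _ t σ σ' stronglyMeasurable_const (memLp_const 1)).trans
      (Filter.EventuallyEq.of_eq ?_)
    funext ω
    rw [if_neg hσ, mul_zero]
    simp
  · -- alpha_sum
    intro t ω
    simp only [piW_single, ite_mul, one_mul, zero_mul]
    rw [Finset.sum_ite_eq' Finset.univ (0 : Fin np) (fun σ => π t ω σ)]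
    simp [hone]
  · -- mean_stat
    intro w t τ
    have h := cov_shift hmeas hindep hident w [] t t τ
    simpa [piW_nil] using h
  · -- cov_stat
    intro w v t s τ
    exact cov_shift hmeas hindep hident w v t s τ


end GLSS
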